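/- (Monotone descent with constraint preservation) Suppose the iterative scheme produces f¹ with F_γ(f¹) < F_γ(1_C) for a consistent partition (C,C̄) with λ = NCut(C,C̄), and γ > gvol(V)·λ/4. Then the partition (A,Ā) obtained by optimal thresholding of f¹ satisfies: A is consistent and NCut(A,Ā) < NCut(C,C̄). -/

import Mathlib

open Finset

/-- cut(C, C̄) = 2 ∑_{i∈C, j∈C̄} w_{ij} -/
noncomputable def cutW {n : ℕ} (w : Fin n → Fin n → ℝ) (C : Finset (Fin n)) : ℝ :=
  2 * ∑ i ∈ C, ∑ j ∈ Cᶜ, w i j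

/-- generalized volume gvol(C) = ∑_{i∈C} b_i -/
noncomputable def gvol {n : ℕ} (b : Fin n → ℝ) (C : Finset (Fin n)) : ℝ := ∑ i ∈ C, b i

/-- bal(C) = 2 gvol(C) gvol(C̄) / gvol(V) -/
noncomputable def bal {n : ℕ} (b : Fin n → ℝ) (C : Finset (Fin n)) : ℝ :=
  2 * gvol b C * gvol b Cᶜ / gvol b Finset.univ

/-- NCut(C,C̄) = cut(C,C̄)/bal(C) -/
noncomputable def ncut {n : ℕ} (w : Fin n → Fin n → ℝ) (b : Fin n → ℝ) (C : Finset (Fin n)) : ℝ :=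
  cutW w C / bal b C

/-- M̂(C) = 2 ∑_{i∈C, j∈C̄} q^m_{ij}, twice the number of violated must-links -/
noncomputable def Mhat {n : ℕ} (qm : Fin n → Fin n → ℝ) (C : Finset (Fin n)) : ℝ :=
  2 * ∑ i ∈ C, ∑ j ∈ Cᶜ, qm i j

/-- N̂(C) = ∑_{i,j∈C} q^c_{ij} + ∑_{i,j∈C̄} q^c_{ij}, twice the number of violated cannot-links -/
noncomputable def Nhat {n : ℕ} (qc : Fin n → Fin n → ℝ) (C : Finset (Fin n)) : ℝ :=
  (∑ i ∈ C, ∑ j ∈ C, qc i j) + ∑ i ∈ Cᶜ, ∑ j ∈ Cᶜ, qc i j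

/-- F̂_γ(C) = (cut(C,C̄) + γ(M̂(C)+N̂(C))) / bal(C) -/
noncomputable def Fhat {n : ℕ} (w : Fin n → Fin n → ℝ) (b : Fin n → ℝ)
    (qm qc : Fin n → Fin n → ℝ) (γ : ℝ) (C : Finset (Fin n)) : ℝ :=
  (cutW w C + γ * (Mhat qm C + Nhat qc C)) / bal b C

/-- M(f) = ∑_{i,j} q^m_{ij} |f_i - f_j| -/
noncomputable def Mfun {n : ℕ} (qm : Fin n → Fin n → ℝ) (f : Fin n → ℝ) : ℝ :=
  ∑ i, ∑ j, qm i j * |f i - f j|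

/-- N(f) = vol(Q^c)(max f - min f) - ∑_{i,j} q^c_{ij} |f_i - f_j| -/
noncomputable def Nfun {n : ℕ} (qc : Fin n → Fin n → ℝ) (f : Fin n → ℝ) : ℝ :=
  (∑ i, ∑ j, qc i j) * ((⨆ i, f i) - (⨅ i, f i)) - ∑ i, ∑ j, qc i j * |f i - f j|

/-- S(f) = ‖B(f - (⟨f,b⟩/gvol(V)) 1)‖₁ with B = diag(b) -/
noncomputable def Sfun {n : ℕ} (b : Fin n → ℝ) (f : Fin n → ℝ) : ℝ :=
  ∑ i, |b i * (f i - (∑ j, f j * b j) / gvol b Finset.univ)|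

/-- F_γ(f), the continuous relaxation of F̂_γ -/
noncomputable def Fgam {n : ℕ} (w : Fin n → Fin n → ℝ) (b : Fin n → ℝ)
    (qm qc : Fin n → Fin n → ℝ) (γ : ℝ) (f : Fin n → ℝ) : ℝ :=
  ((∑ i, ∑ j, w i j * |f i - f j|) + γ * Mfun qm f + γ * Nfun qc f) / Sfun b f

/-- the superlevel set C^t_f = {i : f_i > t} -/
noncomputable def Ctf {n : ℕ} (f : Fin n → ℝ) (t : ℝ) : Finset (Fin n) :=
  Finset.univ.filter (fun i => t < f i)

/-!
The heart of the argument is the tight relaxation `F̂_γ(A) ≤ F_γ(f₁)`. By the co-area formula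
on `[min f, max f]`, the sums `∑ c_ij |f_i - f_j|` for symmetric `c` are the integrals of the
cuts of the level sets `C^s_f`; hence the numerator of `F_γ(f)` is the integral of the numerator
of `F̂_γ(C^s_f)`, while `S(f)` is at most the integral of `bal(C^s_f)`. Integrating
`F̂_γ(A) · bal(C^s_f) ≤ numerator(C^s_f)` over the thresholds gives the inequality.

Since `F_γ(1_C) = F̂_γ(C) = NCut(C)` for consistent `C`, descent gives `F̂_γ(A) < NCut(C)`. An
inconsistent `A` would have `M̂(A) + N̂(A) ≥ 2` (a violated cannot-link counts twice) and
`bal(A) ≤ gvol(V)/2`, hence `F̂_γ(A) ≥ 4γ / gvol(V) > NCut(C)`. So `A` is consistent, and then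
`NCut(A) = F̂_γ(A)`.
-/

section IntervalIntegral

open MeasureTheory

theorem intervalIntegral_indicator_Ico_one {a b c d : ℝ} (hab : a ≤ b) (hac : a ≤ c)
    (hdb : d ≤ b) : ∫ s in a..b, (Set.Ico c d).indicator (1 : ℝ → ℝ) s = max (d - c) 0 := by
  rw [intervalIntegral.integral_of_le hab,
    integral_congr_ae (indicator_ae_eq_of_ae_eq_set (ae_restrict_of_ae Ico_ae_eq_Ioc)),
    setIntegral_indicator measurableSet_Ioc, Set.Ioc_inter_Ioc, max_eq_right hac,
    min_eq_right hdb, ← Real.volume_real_Ioc]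
  simp

theorem intervalIntegrable_indicator_Ico_one (a b c d : ℝ) :
    IntervalIntegrable ((Set.Ico c d).indicator (1 : ℝ → ℝ)) volume a b :=
  ⟨intervalIntegrable_const.1.indicator measurableSet_Ico,
    intervalIntegrable_const.2.indicator measurableSet_Ico⟩

variable {ι : Type*} (s : Finset ι) (c l u : ι → ℝ)

theorem intervalIntegrable_sum_mul_indicator_Ico (a b : ℝ) :
    IntervalIntegrable (fun x => ∑ k ∈ s, c k * (Set.Ico (l k) (u k)).indicator 1 x)
      volume a b := by
  simpa only [Finset.sum_fn] using IntervalIntegrable.sum s fun k _ =>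
    (intervalIntegrable_indicator_Ico_one a b (l k) (u k)).const_mul (c k)

theorem intervalIntegral_sum_mul_indicator_Ico {a b : ℝ} (hab : a ≤ b) (hl : ∀ k, a ≤ l k)
    (hu : ∀ k, u k ≤ b) :
    ∫ x in a..b, ∑ k ∈ s, c k * (Set.Ico (l k) (u k)).indicator 1 x
      = ∑ k ∈ s, c k * max (u k - l k) 0 := by
  rw [intervalIntegral.integral_finsetSum fun k _ =>
    (intervalIntegrable_indicator_Ico_one a b (l k) (u k)).const_mul (c k)]
  refine Finset.sum_congr rfl fun k _ => ?_
  rw [intervalIntegral.integral_const_mul, intervalIntegral_indicator_Ico_one hab (hl k) (hu k)]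

end IntervalIntegral

section DoubleSums

variable {ι : Type*}

theorem sum_sum_nonneg {q : ι → ι → ℝ} (hq : ∀ i j, 0 ≤ q i j) (s t : Finset ι) :
    0 ≤ ∑ i ∈ s, ∑ j ∈ t, q i j :=
  Finset.sum_nonneg fun i _ => Finset.sum_nonneg fun j _ => hq i j

theorem sum_sum_mul_abs_sub [Fintype ι] {c : ι → ι → ℝ} (hc : ∀ i j, c i j = c j i)
    (f : ι → ℝ) :
    ∑ i, ∑ j, c i j * |f i - f j| = 2 * ∑ i, ∑ j, c i j * max (f i - f j) 0 := by
  have h : ∀ i j,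
      c i j * |f i - f j| = c i j * max (f i - f j) 0 + c j i * max (f j - f i) 0 := by
    intro i j
    rw [hc j i, ← mul_add, ← max_zero_add_max_neg_zero_eq_abs_self, neg_sub]
  simp_rw [h, Finset.sum_add_distrib]
  rw [Finset.sum_comm (f := fun i j => c j i * max (f j - f i) 0)]
  ring

theorem nonneg_of_eq_zero_or_eq_one {x : ℝ} (h : x = 0 ∨ x = 1) : 0 ≤ x := by
  rcases h with rfl | rfl <;> norm_num

theorem one_le_sum_sum_of_ne_zero {q : ι → ι → ℝ} (hq : ∀ i j, q i j = 0 ∨ q i j = 1)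
    {s t : Finset ι} (h : ∑ i ∈ s, ∑ j ∈ t, q i j ≠ 0) : 1 ≤ ∑ i ∈ s, ∑ j ∈ t, q i j := by
  have hq0 := fun i j => nonneg_of_eq_zero_or_eq_one (hq i j)
  obtain ⟨i, hi, hi'⟩ := Finset.exists_ne_zero_of_sum_ne_zero h
  obtain ⟨j, hj, hij⟩ := Finset.exists_ne_zero_of_sum_ne_zero hi'
  calc (1 : ℝ) = q i j := ((hq i j).resolve_left hij).symm
    _ ≤ ∑ j ∈ t, q i j := Finset.single_le_sum (fun k _ => hq0 i k) hj
    _ ≤ _ := Finset.single_le_sum (fun k _ => Finset.sum_nonneg fun l _ => hq0 k l) hi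

theorem two_le_sum_sum_of_ne_zero {q : ι → ι → ℝ} (hq : ∀ i j, q i j = 0 ∨ q i j = 1)
    (hsymm : ∀ i j, q i j = q j i) (hdiag : ∀ i, q i i = 0) {s : Finset ι}
    (h : ∑ i ∈ s, ∑ j ∈ s, q i j ≠ 0) : 2 ≤ ∑ i ∈ s, ∑ j ∈ s, q i j := by
  classical
  obtain ⟨i, hi, hi'⟩ := Finset.exists_ne_zero_of_sum_ne_zero h
  obtain ⟨j, hj, hij⟩ := Finset.exists_ne_zero_of_sum_ne_zero hi'
  have hij1 : q i j = 1 := (hq i j).resolve_left hij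
  have hne : (i, j) ≠ (j, i) := by
    intro h
    simp only [Prod.mk.injEq] at h
    rw [h.1, hdiag] at hij
    exact hij rfl
  rw [← Finset.sum_product']
  calc (2 : ℝ) = ∑ p ∈ {(i, j), (j, i)}, q p.1 p.2 := by
        rw [Finset.sum_pair hne]
        dsimp only
        rw [hsymm j i, hij1]
        norm_num
    _ ≤ ∑ p ∈ s ×ˢ s, q p.1 p.2 := by
        refine Finset.sum_le_sum_of_subset_of_nonneg ?_
          fun p _ _ => nonneg_of_eq_zero_or_eq_one (hq p.1 p.2)
        simp [Finset.insert_subset_iff, hi, hj]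

end DoubleSums

section Partitions

variable {n : ℕ}

theorem mem_Ctf {f : Fin n → ℝ} {t : ℝ} {i : Fin n} : i ∈ Ctf f t ↔ t < f i := by
  simp [Ctf]

theorem Ctf_ne_empty [Nonempty (Fin n)] {f : Fin n → ℝ} {s : ℝ} (hs : s < ⨆ i, f i) :
    Ctf f s ≠ ∅ := by
  obtain ⟨i, hi⟩ := exists_lt_of_lt_ciSup hs
  exact Finset.ne_empty_of_mem (mem_Ctf.2 hi)

theorem Ctf_ne_univ [Nonempty (Fin n)] {f : Fin n → ℝ} {s : ℝ} (hs : (⨅ i, f i) ≤ s) :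
    Ctf f s ≠ Finset.univ := by
  obtain ⟨i, hi⟩ := exists_eq_ciInf_of_finite (f := f)
  intro h
  have := mem_Ctf.1 (h ▸ Finset.mem_univ i)
  linarith

theorem sum_sum_compl_eq_sum_sum_ite (c : Fin n → Fin n → ℝ) (C : Finset (Fin n)) :
    ∑ i ∈ C, ∑ j ∈ Cᶜ, c i j = ∑ i, ∑ j, if i ∈ C ∧ j ∉ C then c i j else 0 := by
  rw [← Finset.sum_product', ← Finset.sum_product', ← Finset.sum_filter]
  congr 1; ext ⟨i, j⟩; simp

theorem gvol_pos {b : Fin n → ℝ} (hb : ∀ i, 0 < b i) {C : Finset (Fin n)} (hC : C ≠ ∅) :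
    0 < gvol b C :=
  Finset.sum_pos (fun i _ => hb i) (Finset.nonempty_iff_ne_empty.2 hC)

theorem gvol_univ_pos [Nonempty (Fin n)] {b : Fin n → ℝ} (hb : ∀ i, 0 < b i) :
    0 < gvol b Finset.univ :=
  Finset.sum_pos (fun i _ => hb i) Finset.univ_nonempty

theorem gvol_add_gvol_compl (b : Fin n → ℝ) (C : Finset (Fin n)) :
    gvol b C + gvol b Cᶜ = gvol b Finset.univ :=
  Finset.sum_add_sum_compl C b

theorem bal_pos {b : Fin n → ℝ} (hb : ∀ i, 0 < b i) {C : Finset (Fin n)} (hC : C ≠ ∅)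
    (hC' : C ≠ Finset.univ) : 0 < bal b C := by
  have := gvol_pos hb hC
  have := gvol_pos hb (C := Cᶜ) (by rwa [Ne, Finset.compl_eq_empty_iff])
  rw [bal, ← gvol_add_gvol_compl]
  positivity

theorem bal_le_half (b : Fin n → ℝ) (hV : 0 < gvol b Finset.univ) (C : Finset (Fin n)) :
    bal b C ≤ gvol b Finset.univ / 2 := by
  rw [bal, div_le_div_iff₀ hV two_pos, ← gvol_add_gvol_compl b C]
  nlinarith [sq_nonneg (gvol b C - gvol b Cᶜ)]

theorem bal_eq_cutW_div (b : Fin n → ℝ) (C : Finset (Fin n)) :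
    bal b C = cutW (fun i j => b i * b j) C / gvol b Finset.univ := by
  rw [bal, cutW, gvol, gvol, mul_assoc, Finset.sum_mul_sum]

theorem cutW_nonneg {w : Fin n → Fin n → ℝ} (hw : ∀ i j, 0 ≤ w i j) (C : Finset (Fin n)) :
    0 ≤ cutW w C :=
  mul_nonneg two_pos.le (sum_sum_nonneg hw C Cᶜ)

theorem Mhat_eq_cutW (q : Fin n → Fin n → ℝ) (C : Finset (Fin n)) : Mhat q C = cutW q C := rfl

theorem Nhat_nonneg {q : Fin n → Fin n → ℝ} (hq : ∀ i j, 0 ≤ q i j) (C : Finset (Fin n)) :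
    0 ≤ Nhat q C :=
  add_nonneg (sum_sum_nonneg hq C C) (sum_sum_nonneg hq Cᶜ Cᶜ)

theorem Nhat_eq_sub_cutW {q : Fin n → Fin n → ℝ} (hq : ∀ i j, q i j = q j i)
    (C : Finset (Fin n)) : Nhat q C = ∑ i, ∑ j, q i j - cutW q C := by
  have hrow : ∀ i, ∑ j, q i j = ∑ j ∈ C, q i j + ∑ j ∈ Cᶜ, q i j :=
    fun i => (Finset.sum_add_sum_compl C _).symm
  have hswap : ∑ i ∈ Cᶜ, ∑ j ∈ C, q i j = ∑ i ∈ C, ∑ j ∈ Cᶜ, q i j := by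
    rw [Finset.sum_comm]; simp_rw [hq]
  rw [← Finset.sum_add_sum_compl C, Nhat, cutW]
  simp_rw [hrow, Finset.sum_add_distrib]
  rw [hswap]; ring

theorem diag_le_Nhat {q : Fin n → Fin n → ℝ} (hq : ∀ i j, 0 ≤ q i j) (C : Finset (Fin n))
    (i : Fin n) : q i i ≤ Nhat q C := by
  have hdiag : ∀ D : Finset (Fin n), i ∈ D → q i i ≤ ∑ k ∈ D, ∑ l ∈ D, q k l := fun D hi =>
    (Finset.single_le_sum (fun l _ => hq i l) hi).trans
      (Finset.single_le_sum (fun k _ => Finset.sum_nonneg fun l _ => hq k l) hi)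
  rw [Nhat]
  by_cases hi : i ∈ C
  · linarith [hdiag C hi, sum_sum_nonneg hq Cᶜ Cᶜ]
  · linarith [hdiag Cᶜ (Finset.mem_compl.2 hi), sum_sum_nonneg hq C C]

end Partitions

section Relaxation

open MeasureTheory

variable {n : ℕ}

theorem sum_sum_Ctf_compl_eq (f : Fin n → ℝ) (c : Fin n → Fin n → ℝ) (s : ℝ) :
    ∑ i ∈ Ctf f s, ∑ j ∈ (Ctf f s)ᶜ, c i j
      = ∑ p : Fin n × Fin n, c p.1 p.2 * (Set.Ico (f p.2) (f p.1)).indicator 1 s := by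
  rw [sum_sum_compl_eq_sum_sum_ite, ← Finset.univ_product_univ, Finset.sum_product]
  refine Finset.sum_congr rfl fun i _ => Finset.sum_congr rfl fun j _ => ?_
  by_cases h : f j ≤ s ∧ s < f i <;> simp_all [mem_Ctf, and_comm]

theorem intervalIntegrable_cutW_Ctf (f : Fin n → ℝ) (c : Fin n → Fin n → ℝ) (a b : ℝ) :
    IntervalIntegrable (fun s => cutW c (Ctf f s)) volume a b := by
  simp_rw [cutW, sum_sum_Ctf_compl_eq]
  exact (intervalIntegrable_sum_mul_indicator_Ico _ _ _ _ a b).const_mul 2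

theorem intervalIntegral_cutW_Ctf {f : Fin n → ℝ} {c : Fin n → Fin n → ℝ}
    (hc : ∀ i j, c i j = c j i) {a b : ℝ} (hab : a ≤ b) (hfa : ∀ i, a ≤ f i)
    (hfb : ∀ i, f i ≤ b) :
    ∫ s in a..b, cutW c (Ctf f s) = ∑ i, ∑ j, c i j * |f i - f j| := by
  simp_rw [cutW, sum_sum_Ctf_compl_eq]
  rw [intervalIntegral.integral_const_mul,
    intervalIntegral_sum_mul_indicator_Ico (Finset.univ : Finset (Fin n × Fin n))
      (fun p => c p.1 p.2) (fun p => f p.2) (fun p => f p.1) hab (fun p => hfa p.2)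
      (fun p => hfb p.1),
    sum_sum_mul_abs_sub hc, Fintype.sum_prod_type]

theorem intervalIntegral_iInf_iSup_cutW_Ctf [Nonempty (Fin n)] {c : Fin n → Fin n → ℝ}
    (hc : ∀ i j, c i j = c j i) (f : Fin n → ℝ) :
    ∫ s in (⨅ i, f i)..(⨆ i, f i), cutW c (Ctf f s) = ∑ i, ∑ j, c i j * |f i - f j| := by
  have hfa : ∀ i, (⨅ i, f i) ≤ f i := ciInf_le (Finite.bddBelow_range f)
  have hfc : ∀ i, f i ≤ ⨆ i, f i := le_ciSup (Finite.bddAbove_range f)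
  exact intervalIntegral_cutW_Ctf hc ((hfa (Classical.arbitrary _)).trans (hfc _)) hfa hfc

theorem Sfun_le {b : Fin n → ℝ} (hb : ∀ i, 0 ≤ b i) (hV : 0 < gvol b Finset.univ)
    (f : Fin n → ℝ) :
    Sfun b f ≤ (∑ i, ∑ j, b i * b j * |f i - f j|) / gvol b Finset.univ := by
  have hrow : ∀ i, b i * (f i - (∑ j, f j * b j) / gvol b Finset.univ)
      = (∑ j, b i * b j * (f i - f j)) / gvol b Finset.univ := by
    intro i
    field_simp
    simp only [gvol, Finset.mul_sum, ← Finset.sum_sub_distrib]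
    exact Finset.sum_congr rfl fun j _ => by ring
  calc Sfun b f = ∑ i, |(∑ j, b i * b j * (f i - f j)) / gvol b Finset.univ| := by
        simp only [Sfun, hrow]
    _ ≤ ∑ i, (∑ j, b i * b j * |f i - f j|) / gvol b Finset.univ := by
        gcongr with i
        rw [abs_div, abs_of_pos hV]
        gcongr
        refine (Finset.abs_sum_le_sum_abs _ _).trans_eq (Finset.sum_congr rfl fun j _ => ?_)
        rw [abs_mul, abs_of_nonneg (mul_nonneg (hb i) (hb j))]
    _ = _ := (Finset.sum_div _ _ _).symm

theorem Sfun_pos {b f : Fin n → ℝ} (hb : ∀ i, 0 < b i) (hf : ∃ i j, f i ≠ f j) :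
    0 < Sfun b f := by
  obtain ⟨i, j, hij⟩ := hf
  obtain ⟨k, hk⟩ : ∃ k, f k ≠ (∑ k, f k * b k) / gvol b Finset.univ := by
    by_contra! h
    exact hij ((h i).trans (h j).symm)
  exact Finset.sum_pos' (fun _ _ => abs_nonneg _)
    ⟨k, Finset.mem_univ _, abs_pos.2 (mul_ne_zero (hb k).ne' (sub_ne_zero.2 hk))⟩

theorem intervalIntegrable_Fhat_numerator_Ctf (w qm : Fin n → Fin n → ℝ)
    {qc : Fin n → Fin n → ℝ} (hqc : ∀ i j, qc i j = qc j i) (f : Fin n → ℝ) (γ a c : ℝ) :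
    IntervalIntegrable
      (fun s => cutW w (Ctf f s) + γ * (Mhat qm (Ctf f s) + Nhat qc (Ctf f s))) volume a c := by
  have hint := fun q => intervalIntegrable_cutW_Ctf f q a c
  simp_rw [Mhat_eq_cutW, Nhat_eq_sub_cutW hqc]
  exact (hint w).add (((hint qm).add (intervalIntegrable_const.sub (hint qc))).const_mul γ)

theorem Fgam_numerator_eq_intervalIntegral [Nonempty (Fin n)] {w qm qc : Fin n → Fin n → ℝ}
    (hw : ∀ i j, w i j = w j i) (hqm : ∀ i j, qm i j = qm j i) (hqc : ∀ i j, qc i j = qc j i)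
    (f : Fin n → ℝ) (γ : ℝ) :
    (∑ i, ∑ j, w i j * |f i - f j|) + γ * Mfun qm f + γ * Nfun qc f
      = ∫ s in (⨅ i, f i)..(⨆ i, f i),
          cutW w (Ctf f s) + γ * (Mhat qm (Ctf f s) + Nhat qc (Ctf f s)) := by
  have hint := fun q => intervalIntegrable_cutW_Ctf f q (⨅ i, f i) (⨆ i, f i)
  simp_rw [Mhat_eq_cutW, Nhat_eq_sub_cutW hqc]
  rw [intervalIntegral.integral_add (hint w)
      (((hint qm).add (intervalIntegrable_const.sub (hint qc))).const_mul γ),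
    intervalIntegral.integral_const_mul,
    intervalIntegral.integral_add (hint qm) (intervalIntegrable_const.sub (hint qc)),
    intervalIntegral.integral_sub intervalIntegrable_const (hint qc),
    intervalIntegral.integral_const, intervalIntegral_iInf_iSup_cutW_Ctf hw,
    intervalIntegral_iInf_iSup_cutW_Ctf hqm, intervalIntegral_iInf_iSup_cutW_Ctf hqc, Mfun, Nfun,
    smul_eq_mul]
  ring

theorem Sfun_le_intervalIntegral_bal [Nonempty (Fin n)] {b : Fin n → ℝ} (hb : ∀ i, 0 < b i)
    (f : Fin n → ℝ) : Sfun b f ≤ ∫ s in (⨅ i, f i)..(⨆ i, f i), bal b (Ctf f s) := by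
  simp_rw [bal_eq_cutW_div]
  rw [intervalIntegral.integral_div,
    intervalIntegral_iInf_iSup_cutW_Ctf (fun i j => mul_comm (b i) (b j))]
  exact Sfun_le (fun i => (hb i).le) (gvol_univ_pos hb) f

theorem le_Fgam_of_forall_le_Fhat_Ctf {w qm qc : Fin n → Fin n → ℝ} {b f : Fin n → ℝ}
    {γ r : ℝ} (hw : ∀ i j, w i j = w j i) (hqm : ∀ i j, qm i j = qm j i)
    (hqc : ∀ i j, qc i j = qc j i) (hb : ∀ i, 0 < b i) (hf : ∃ i j, f i ≠ f j) (hr : 0 ≤ r)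
    (h : ∀ s, (⨅ i, f i) ≤ s → s < (⨆ i, f i) → r ≤ Fhat w b qm qc γ (Ctf f s)) :
    r ≤ Fgam w b qm qc γ f := by
  obtain ⟨i₀, j₀, hij⟩ := hf
  have : Nonempty (Fin n) := ⟨i₀⟩
  have hac : (⨅ i, f i) < ⨆ i, f i := by
    have hfa : ∀ i, (⨅ i, f i) ≤ f i := ciInf_le (Finite.bddBelow_range f)
    have hfc : ∀ i, f i ≤ ⨆ i, f i := le_ciSup (Finite.bddAbove_range f)
    rcases hij.lt_or_gt with h | h
    · exact (hfa i₀).trans_lt (h.trans_le (hfc j₀))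
    · exact (hfa j₀).trans_lt (h.trans_le (hfc i₀))
  have hint_bal : IntervalIntegrable (fun s => r * bal b (Ctf f s)) volume
      (⨅ i, f i) (⨆ i, f i) := by
    simp_rw [bal_eq_cutW_div]
    exact ((intervalIntegrable_cutW_Ctf f _ _ _).div_const _).const_mul r
  have hlevel : ∀ s ∈ Set.Ioo (⨅ i, f i) (⨆ i, f i), r * bal b (Ctf f s)
      ≤ cutW w (Ctf f s) + γ * (Mhat qm (Ctf f s) + Nhat qc (Ctf f s)) := fun s hs =>
    (le_div_iff₀ (bal_pos hb (Ctf_ne_empty hs.2) (Ctf_ne_univ hs.1.le))).1 (h s hs.1.le hs.2)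
  rw [Fgam, le_div_iff₀ (Sfun_pos hb ⟨i₀, j₀, hij⟩),
    Fgam_numerator_eq_intervalIntegral hw hqm hqc]
  calc r * Sfun b f ≤ r * ∫ s in (⨅ i, f i)..(⨆ i, f i), bal b (Ctf f s) :=
        mul_le_mul_of_nonneg_left (Sfun_le_intervalIntegral_bal hb f) hr
    _ = ∫ s in (⨅ i, f i)..(⨆ i, f i), r * bal b (Ctf f s) :=
        (intervalIntegral.integral_const_mul _ _).symm
    _ ≤ _ := intervalIntegral.integral_mono_on_of_le_Ioo hac.le hint_bal
        (intervalIntegrable_Fhat_numerator_Ctf w qm hqc f γ _ _) hlevel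

end Relaxation

section Indicator

variable {n : ℕ} {C : Finset (Fin n)}

theorem sum_sum_mul_abs_indicator_sub {c : Fin n → Fin n → ℝ} (hc : ∀ i j, c i j = c j i)
    (C : Finset (Fin n)) :
    ∑ i, ∑ j, c i j * |(if i ∈ C then 1 else 0) - (if j ∈ C then 1 else 0)| = cutW c C := by
  rw [sum_sum_mul_abs_sub hc, cutW, sum_sum_compl_eq_sum_sum_ite]
  congr 1
  refine Finset.sum_congr rfl fun i _ => Finset.sum_congr rfl fun j _ => ?_
  by_cases hi : i ∈ C <;> by_cases hj : j ∈ C <;> simp [hi, hj]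

theorem iSup_indicator (hC : C ≠ ∅) : (⨆ i, if i ∈ C then (1 : ℝ) else 0) = 1 := by
  obtain ⟨i₀, hi₀⟩ := Finset.nonempty_iff_ne_empty.2 hC
  have : Nonempty (Fin n) := ⟨i₀⟩
  refine le_antisymm (ciSup_le fun i => ?_) (le_ciSup_of_le (Finite.bddAbove_range _) i₀ ?_)
  · split_ifs <;> norm_num
  · simp [hi₀]

theorem iInf_indicator (hC : C ≠ Finset.univ) : (⨅ i, if i ∈ C then (1 : ℝ) else 0) = 0 := by
  obtain ⟨i₀, hi₀⟩ : ∃ i, i ∉ C := by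
    by_contra! h
    exact hC (Finset.eq_univ_of_forall h)
  have : Nonempty (Fin n) := ⟨i₀⟩
  refine le_antisymm (ciInf_le_of_le (Finite.bddBelow_range _) i₀ ?_) (le_ciInf fun i => ?_)
  · simp [hi₀]
  · split_ifs <;> norm_num

theorem Sfun_indicator {b : Fin n → ℝ} (hb : ∀ i, 0 < b i) (hC : C ≠ ∅)
    (hC' : C ≠ Finset.univ) : Sfun b (fun i => if i ∈ C then 1 else 0) = bal b C := by
  have hV := gvol_add_gvol_compl b C
  have := gvol_pos hb hC
  have := gvol_pos hb (C := Cᶜ) (by rwa [Ne, Finset.compl_eq_empty_iff])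
  have hmean : ∑ j, (if j ∈ C then (1 : ℝ) else 0) * b j = gvol b C := by
    simp [ite_mul, Finset.sum_ite_mem, gvol]
  have hcompl : 1 - gvol b C / gvol b Finset.univ = gvol b Cᶜ / gvol b Finset.univ := by
    rw [← hV]; field_simp; ring
  have hin : ∀ i ∈ C, |b i * ((if i ∈ C then 1 else 0) - gvol b C / gvol b Finset.univ)|
      = b i * (gvol b Cᶜ / gvol b Finset.univ) := by
    intro i hi
    have := (hb i).le
    rw [if_pos hi, hcompl, abs_of_nonneg (by rw [← hV]; positivity)]
  have hout : ∀ i ∈ Cᶜ, |b i * ((if i ∈ C then 1 else 0) - gvol b C / gvol b Finset.univ)|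
      = b i * (gvol b C / gvol b Finset.univ) := by
    intro i hi
    have := (hb i).le
    rw [if_neg (Finset.mem_compl.1 hi), zero_sub, mul_neg, abs_neg,
      abs_of_nonneg (by rw [← hV]; positivity)]
  rw [Sfun, hmean, ← Finset.sum_add_sum_compl C, Finset.sum_congr rfl hin,
    Finset.sum_congr rfl hout, ← Finset.sum_mul, ← Finset.sum_mul, bal]
  simp only [gvol]
  ring

theorem Fgam_indicator {w qm qc : Fin n → Fin n → ℝ} {b : Fin n → ℝ} (γ : ℝ)
    (hw : ∀ i j, w i j = w j i) (hqm : ∀ i j, qm i j = qm j i) (hqc : ∀ i j, qc i j = qc j i)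
    (hb : ∀ i, 0 < b i) (hC : C ≠ ∅) (hC' : C ≠ Finset.univ) :
    Fgam w b qm qc γ (fun i => if i ∈ C then 1 else 0) = Fhat w b qm qc γ C := by
  rw [Fgam, Fhat, Mfun, Nfun, sum_sum_mul_abs_indicator_sub hw,
    sum_sum_mul_abs_indicator_sub hqm, sum_sum_mul_abs_indicator_sub hqc, iSup_indicator hC,
    iInf_indicator hC', Sfun_indicator hb hC hC', Mhat_eq_cutW, Nhat_eq_sub_cutW hqc]
  ring

end Indicator

section Consistency

variable {n : ℕ} {w qm qc : Fin n → Fin n → ℝ} {b : Fin n → ℝ} {γ : ℝ} {C : Finset (Fin n)}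

theorem Fhat_eq_ncut (h : Mhat qm C = 0 ∧ Nhat qc C = 0) :
    Fhat w b qm qc γ C = ncut w b C := by
  simp [Fhat, ncut, h.1, h.2]

theorem Fhat_nonneg (hw : ∀ i j, 0 ≤ w i j) (hqm : ∀ i j, 0 ≤ qm i j)
    (hqc : ∀ i j, 0 ≤ qc i j) (hb : ∀ i, 0 < b i) (hγ : 0 ≤ γ) (hC : C ≠ ∅)
    (hC' : C ≠ Finset.univ) : 0 ≤ Fhat w b qm qc γ C :=
  div_nonneg (add_nonneg (cutW_nonneg hw C)
    (mul_nonneg hγ (add_nonneg (cutW_nonneg hqm C) (Nhat_nonneg hqc C)))) (bal_pos hb hC hC').le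

theorem two_le_Mhat_add_Nhat (hqm : ∀ i j, qm i j = 0 ∨ qm i j = 1)
    (hqc : ∀ i j, qc i j = 0 ∨ qc i j = 1) (hqc_symm : ∀ i j, qc i j = qc j i)
    (hqc_diag : ∀ i, qc i i = 0) (h : ¬(Mhat qm C = 0 ∧ Nhat qc C = 0)) :
    2 ≤ Mhat qm C + Nhat qc C := by
  have hqm0 := fun i j => nonneg_of_eq_zero_or_eq_one (hqm i j)
  have hqc0 := fun i j => nonneg_of_eq_zero_or_eq_one (hqc i j)
  have hN2 := fun D => two_le_sum_sum_of_ne_zero hqc hqc_symm hqc_diag (s := D)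
  rw [Mhat, Nhat] at h ⊢
  by_cases hM : ∑ i ∈ C, ∑ j ∈ Cᶜ, qm i j = 0
  · by_cases hN : ∑ i ∈ C, ∑ j ∈ C, qc i j = 0
    · have : ∑ i ∈ Cᶜ, ∑ j ∈ Cᶜ, qc i j ≠ 0 := fun h' => h ⟨by simp [hM], by simp [hN, h']⟩
      linarith [hN2 Cᶜ this, sum_sum_nonneg hqc0 C C]
    · linarith [hN2 C hN, sum_sum_nonneg hqc0 Cᶜ Cᶜ, sum_sum_nonneg hqm0 C Cᶜ]
  · linarith [one_le_sum_sum_of_ne_zero hqm hM, sum_sum_nonneg hqc0 C C,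
      sum_sum_nonneg hqc0 Cᶜ Cᶜ]

theorem four_mul_div_le_Fhat (hw : ∀ i j, 0 ≤ w i j) (hb : ∀ i, 0 < b i) (hγ : 0 ≤ γ)
    (hC : C ≠ ∅) (hC' : C ≠ Finset.univ) (h : 2 ≤ Mhat qm C + Nhat qc C) :
    4 * γ / gvol b Finset.univ ≤ Fhat w b qm qc γ C := by
  obtain ⟨i₀, -⟩ := Finset.nonempty_iff_ne_empty.2 hC
  have : Nonempty (Fin n) := ⟨i₀⟩
  calc 4 * γ / gvol b Finset.univ = 2 * γ / (gvol b Finset.univ / 2) := by field_simp; ring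
    _ ≤ 2 * γ / bal b C :=
        div_le_div_of_nonneg_left (by positivity) (bal_pos hb hC hC')
          (bal_le_half b (gvol_univ_pos hb) C)
    _ ≤ Fhat w b qm qc γ C := by
        refine div_le_div_of_nonneg_right ?_ (bal_pos hb hC hC').le
        nlinarith [cutW_nonneg hw C]

end Consistency

theorem stmt_19_general {n : ℕ} (w : Fin n → Fin n → ℝ) (b : Fin n → ℝ)
    (qm qc : Fin n → Fin n → ℝ)
    (hw_symm : ∀ i j, w i j = w j i) (hw_nonneg : ∀ i j, 0 ≤ w i j)
    (hb : ∀ i, 0 < b i)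
    (hqm01 : ∀ i j, qm i j = 0 ∨ qm i j = 1) (hqm_symm : ∀ i j, qm i j = qm j i)
    (hqc01 : ∀ i j, qc i j = 0 ∨ qc i j = 1) (hqc_symm : ∀ i j, qc i j = qc j i)
    (C : Finset (Fin n)) (hC₁ : C ≠ ∅) (hC₂ : C ≠ Finset.univ)
    (hcons : Mhat qm C = 0 ∧ Nhat qc C = 0)
    (γ : ℝ) (hγ0 : 0 ≤ γ) (hγ : gvol b Finset.univ * ncut w b C / 4 < γ)
    (f₁ : Fin n → ℝ) (hf₁ : ∃ i j, f₁ i ≠ f₁ j)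
    (hdesc : Fgam w b qm qc γ f₁ <
      Fgam w b qm qc γ (fun i => if i ∈ C then 1 else 0))
    (t : ℝ) (ht₁ : (⨅ i, f₁ i) ≤ t) (ht₂ : t < (⨆ i, f₁ i))
    (A : Finset (Fin n)) (hA : A = Ctf f₁ t)
    (hopt : ∀ s : ℝ, (⨅ i, f₁ i) ≤ s → s < (⨆ i, f₁ i) →
      Fhat w b qm qc γ A ≤ Fhat w b qm qc γ (Ctf f₁ s)) :
    (Mhat qm A = 0 ∧ Nhat qc A = 0) ∧ ncut w b A < ncut w b C := by
  obtain ⟨i₀, -⟩ := Finset.nonempty_iff_ne_empty.2 hC₁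
  have : Nonempty (Fin n) := ⟨i₀⟩
  have hqm_nn := fun i j => nonneg_of_eq_zero_or_eq_one (hqm01 i j)
  have hqc_nn := fun i j => nonneg_of_eq_zero_or_eq_one (hqc01 i j)
  have hA₁ : A ≠ ∅ := hA ▸ Ctf_ne_empty ht₂
  have hA₂ : A ≠ Finset.univ := hA ▸ Ctf_ne_univ ht₁
  have hA_lt : Fhat w b qm qc γ A < ncut w b C :=
    calc Fhat w b qm qc γ A ≤ Fgam w b qm qc γ f₁ :=
          le_Fgam_of_forall_le_Fhat_Ctf hw_symm hqm_symm hqc_symm hb hf₁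
            (Fhat_nonneg hw_nonneg hqm_nn hqc_nn hb hγ0 hA₁ hA₂) hopt
      _ < Fgam w b qm qc γ (fun i => if i ∈ C then 1 else 0) := hdesc
      _ = ncut w b C := by
          rw [Fgam_indicator γ hw_symm hqm_symm hqc_symm hb hC₁ hC₂, Fhat_eq_ncut hcons]
  have hconsA : Mhat qm A = 0 ∧ Nhat qc A = 0 := by
    by_contra hinc
    -- a cannot-link `(i, i)` would be violated by every partition, in particular by `C`
    have hqc_diag : ∀ i, qc i i = 0 := fun i =>
      le_antisymm (hcons.2 ▸ diag_le_Nhat hqc_nn C i) (hqc_nn i i)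
    have hA_ge := four_mul_div_le_Fhat hw_nonneg hb hγ0 hA₁ hA₂
      (two_le_Mhat_add_Nhat hqm01 hqc01 hqc_symm hqc_diag hinc)
    have hC_lt : ncut w b C < 4 * γ / gvol b Finset.univ := by
      rw [lt_div_iff₀ (gvol_univ_pos hb)]; linarith
    linarith
  exact ⟨hconsA, Fhat_eq_ncut (γ := γ) hconsA ▸ hA_lt⟩

/-- Monotone descent with constraint preservation: if (C,C̄) is consistent with
λ = NCut(C,C̄), γ > gvol(V)·λ/4, and f¹ satisfies F_γ(f¹) < F_γ(1_C), then the partition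
(A,Ā) obtained from f¹ by optimal thresholding is consistent and NCut(A,Ā) < NCut(C,C̄). -/
theorem stmt_19 {n : ℕ} (hn : 1 < n) (w : Fin n → Fin n → ℝ) (b : Fin n → ℝ)
    (qm qc : Fin n → Fin n → ℝ)
    (hw_symm : ∀ i j, w i j = w j i) (hw_nonneg : ∀ i j, 0 ≤ w i j)
    (hb : ∀ i, 0 < b i)
    (hqm01 : ∀ i j, qm i j = 0 ∨ qm i j = 1) (hqm_symm : ∀ i j, qm i j = qm j i)
    (hqc01 : ∀ i j, qc i j = 0 ∨ qc i j = 1) (hqc_symm : ∀ i j, qc i j = qc j i)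
    (hconn : ∀ C : Finset (Fin n), C ≠ ∅ → C ≠ Finset.univ → 0 < cutW w C)
    (C : Finset (Fin n)) (hC₁ : C ≠ ∅) (hC₂ : C ≠ Finset.univ)
    (hcons : Mhat qm C = 0 ∧ Nhat qc C = 0)
    (γ : ℝ) (hγ0 : 0 ≤ γ) (hγ : gvol b Finset.univ * ncut w b C / 4 < γ)
    (f₁ : Fin n → ℝ) (hf₁ : ∃ i j, f₁ i ≠ f₁ j)
    (hdesc : Fgam w b qm qc γ f₁ <
      Fgam w b qm qc γ (fun i => if i ∈ C then 1 else 0))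
    (t : ℝ) (ht₁ : (⨅ i, f₁ i) ≤ t) (ht₂ : t < (⨆ i, f₁ i))
    (A : Finset (Fin n)) (hA : A = Ctf f₁ t)
    (hopt : ∀ s : ℝ, (⨅ i, f₁ i) ≤ s → s < (⨆ i, f₁ i) →
      Fhat w b qm qc γ A ≤ Fhat w b qm qc γ (Ctf f₁ s)) :
    (Mhat qm A = 0 ∧ Nhat qc A = 0) ∧ ncut w b A < ncut w b C :=
  stmt_19_general w b qm qc hw_symm hw_nonneg hb hqm01 hqm_symm hqc01 hqc_symm C hC₁ hC₂ hcons γ hγ0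
    hγ f₁ hf₁ hdesc t ht₁ ht₂ A hA hopt
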